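/- Let d ≥ 2 be an integer and 0 < p < 1. For each n : ℕ let f(n) be the infimum, over all PPT POVM elements E on the n-copy space, of Re(p · Tr(E · σ_d^{⊗n}) + (1−p) · Tr((1 − E) · α_d^{⊗n})). Then −(1/n) · log(f(n)) tends to log((d+1)/(d−1)) as n → ∞; i.e. the PPT (and hence LOCC) Chernoff distance between σ_d and α_d is log((d+1)/(d−1)). -/

import Mathlib

open Matrix Finset
open scoped BigOperators Kronecker ComplexOrder

noncomputable section

/-- The flip (swap) operator on `ℂ^d ⊗ ℂ^d`. -/
def Flip (d : ℕ) : Matrix (Fin d × Fin d) (Fin d × Fin d) ℂ :=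
  Matrix.of fun p q => if p.1 = q.2 ∧ p.2 = q.1 then 1 else 0

/-- Projection onto the symmetric subspace, `Π_s = (1 + F)/2`. -/
def projSym (d : ℕ) : Matrix (Fin d × Fin d) (Fin d × Fin d) ℂ :=
  (2 : ℂ)⁻¹ • (1 + Flip d)

/-- Projection onto the antisymmetric subspace, `Π_a = (1 - F)/2`. -/
def projAsym (d : ℕ) : Matrix (Fin d × Fin d) (Fin d × Fin d) ℂ :=
  (2 : ℂ)⁻¹ • (1 - Flip d)

/-- The symmetric Werner state `σ_d = (2/(d(d+1))) • Π_s`. -/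
def wernerSym (d : ℕ) : Matrix (Fin d × Fin d) (Fin d × Fin d) ℂ :=
  (2 / ((d : ℂ) * ((d : ℂ) + 1))) • projSym d

/-- The antisymmetric Werner state `α_d = (2/(d(d-1))) • Π_a`. -/
def wernerAsym (d : ℕ) : Matrix (Fin d × Fin d) (Fin d × Fin d) ℂ :=
  (2 / ((d : ℂ) * ((d : ℂ) - 1))) • projAsym d

/-- The POVM element `G_d`: diagonal, with `(i,j),(i,j)` entry `1` iff `i ≠ j`. -/
def Gmat (d : ℕ) : Matrix (Fin d × Fin d) (Fin d × Fin d) ℂ :=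
  Matrix.diagonal fun p => if p.1 ≠ p.2 then 1 else 0

/-- `n`-fold tensor power of a matrix on `ℂ^d ⊗ ℂ^d`. -/
def tpow {d : ℕ} (n : ℕ) (X : Matrix (Fin d × Fin d) (Fin d × Fin d) ℂ) :
    Matrix (Fin n → Fin d × Fin d) (Fin n → Fin d × Fin d) ℂ :=
  Matrix.of fun f g => ∏ m, X (f m) (g m)

/-- The twirled single-copy POVM element `M_d = ((d-1)/(d+1)) • Π_s + Π_a`. -/
def MdMat (d : ℕ) : Matrix (Fin d × Fin d) (Fin d × Fin d) ℂ :=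
  (((d : ℂ) - 1) / ((d : ℂ) + 1)) • projSym d + projAsym d

/-- `A_k`: sum over all `k`-element subsets `S` of the copies of the tensor product with
`Π_a` on copies in `S` and `Π_s` elsewhere. -/
def Amat (d n k : ℕ) : Matrix (Fin n → Fin d × Fin d) (Fin n → Fin d × Fin d) ℂ :=
  ∑ S ∈ Finset.powersetCard k (Finset.univ : Finset (Fin n)),
    Matrix.of fun f g => ∏ m, (if m ∈ S then projAsym d else projSym d) (f m) (g m)

/-- Partial transpose on `ℂ^d ⊗ ℂ^d`. -/
def pt {d : ℕ} (X : Matrix (Fin d × Fin d) (Fin d × Fin d) ℂ) :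
    Matrix (Fin d × Fin d) (Fin d × Fin d) ℂ :=
  Matrix.of fun p q => X (p.1, q.2) (q.1, p.2)

/-- The maximally entangled state `Φ_d`. -/
def Phi (d : ℕ) : Matrix (Fin d × Fin d) (Fin d × Fin d) ℂ :=
  Matrix.of fun p q => if p.1 = p.2 ∧ q.1 = q.2 then ((d : ℂ))⁻¹ else 0

/-- `n`-copy partial transpose. -/
def ptN {d n : ℕ} (Y : Matrix (Fin n → Fin d × Fin d) (Fin n → Fin d × Fin d) ℂ) :
    Matrix (Fin n → Fin d × Fin d) (Fin n → Fin d × Fin d) ℂ :=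
  Matrix.of fun f g => Y (fun m => ((f m).1, (g m).2)) (fun m => ((g m).1, (f m).2))

/-- `T_l`: sum over all `l`-element subsets `S` of the copies of the tensor product with
`Φ_d` on copies in `S` and `1 - Φ_d` elsewhere. -/
def Tmat (d n l : ℕ) : Matrix (Fin n → Fin d × Fin d) (Fin n → Fin d × Fin d) ℂ :=
  ∑ S ∈ Finset.powersetCard l (Finset.univ : Finset (Fin n)),
    Matrix.of fun f g => ∏ m, (if m ∈ S then Phi d else (1 - Phi d)) (f m) (g m)

/-- The matrix `Q` of the linear program: `Q l k = Σ_{j=0}^{min(l,k)}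
(n−l choose k−j)(l choose j)(1−d)^j (1+d)^{l−j}`. -/
def Qmat (n : ℕ) (d : ℝ) (l k : ℕ) : ℝ :=
  ∑ j ∈ Finset.range (min l k + 1),
    ((n - l).choose (k - j) : ℝ) * (l.choose j : ℝ) * (1 - d) ^ j * (1 + d) ^ (l - j)

/-- A PPT POVM element on the `n`-copy space: `E`, `1 - E`, `E^Γ`, `(1-E)^Γ` all PSD. -/
def IsPPTPovmElem {d n : ℕ}
    (E : Matrix (Fin n → Fin d × Fin d) (Fin n → Fin d × Fin d) ℂ) : Prop :=
  E.PosSemidef ∧ (1 - E).PosSemidef ∧ (ptN E).PosSemidef ∧ (ptN (1 - E)).PosSemidef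

/-- Error probability for discriminating `σ_d^{⊗n}` (prior `p`) from `α_d^{⊗n}`
(prior `1-p`) with the two-outcome POVM `{E, 1 - E}`. -/
def errProb (d n : ℕ) (p : ℝ)
    (E : Matrix (Fin n → Fin d × Fin d) (Fin n → Fin d × Fin d) ℂ) : ℝ :=
  ((p : ℂ) * (E * tpow n (wernerSym d)).trace
    + (1 - (p : ℂ)) * ((1 - E) * tpow n (wernerAsym d)).trace).re

/-- Separability of a bipartite matrix. -/
def IsSep {I J : Type*} [Fintype I] [Fintype J]
    (W : Matrix (I × J) (I × J) ℂ) : Prop :=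
  ∃ (m : ℕ) (A : Fin m → Matrix I I ℂ) (B : Fin m → Matrix J J ℂ),
    (∀ i, (A i).PosSemidef) ∧ (∀ i, (B i).PosSemidef) ∧ W = ∑ i, A i ⊗ₖ B i

/-- Trace norm `‖X‖₁ = Tr √(Xᴴ X)`. -/
def traceNorm {ι : Type*} [Fintype ι] [DecidableEq ι] (X : Matrix ι ι ℂ) : ℝ :=
  ((Matrix.posSemidef_conjTranspose_mul_self X).1.eigenvectorUnitary.1 *
    Matrix.diagonal ((fun x : ℝ => (x : ℂ)) ∘ (√·) ∘ (Matrix.posSemidef_conjTranspose_mul_self X).1.eigenvalues) *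
    (star (Matrix.posSemidef_conjTranspose_mul_self X).1.eigenvectorUnitary :
      Matrix ι ι ℂ)).trace.re

/-- Frobenius (Hilbert–Schmidt) norm `‖X‖₂ = √(Tr (Xᴴ X))`. -/
def frobNorm {ι : Type*} [Fintype ι] (X : Matrix ι ι ℂ) : ℝ :=
  Real.sqrt ((Xᴴ * X).trace.re)

/-!
The PPT measurement `M_d = ((d-1)/(d+1)) Π_s + Π_a` never errs on `α_d` and errs on `σ_d` with
probability `λ = (d-1)/(d+1)`, so `M_d^{⊗n}` achieves error `p λⁿ`. Conversely, under partial
transposition `σ_d` and `λ α_d` become `(d(d+1))⁻¹ (1 ± d Φ_d)`; expanding the tensor powers over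
the orthogonal projections `Φ_d` and `1 - Φ_d`, the coefficients satisfy `|1 - d|ᵏ ≤ (1 + d)ᵏ`, so
`(σ_d^{⊗n} - λⁿ α_d^{⊗n})^Γ ≥ 0`. Pairing with `E^Γ ≥ 0` gives `λⁿ Tr(E α_d^{⊗n}) ≤ Tr(E σ_d^{⊗n})`
for every PPT `E`, hence every PPT error is at least `p λⁿ` as soon as `p λⁿ ≤ 1 - p`. So the
optimal error is exactly `p λⁿ` for large `n`.
-/

namespace Matrix

section PosSemidef

variable {ι : Type*} [Fintype ι]

lemma IsStarProjection.posSemidef {R : Type*} [CommRing R] [PartialOrder R] [StarRing R]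
    [StarOrderedRing R] {P : Matrix ι ι R} (hP : IsStarProjection P) : P.PosSemidef := by
  simpa [← star_eq_conjTranspose, hP.isSelfAdjoint.star_eq, hP.isIdempotentElem.eq] using
    posSemidef_conjTranspose_mul_self P

lemma isStarProjection_inv_two_smul_one_add [DecidableEq ι] {F : Matrix ι ι ℂ}
    (hF : Fᴴ = F) (hF2 : F * F = 1) : IsStarProjection ((2 : ℂ)⁻¹ • (1 + F)) where
  isIdempotentElem := by
    simp only [IsIdempotentElem, smul_mul_smul, add_mul, mul_add, one_mul, mul_one, hF2]
    module
  isSelfAdjoint := by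
    simp [IsSelfAdjoint, star_eq_conjTranspose, hF]

lemma PosSemidef.exists_eq_conjTranspose_mul_self {P : Matrix ι ι ℂ} (hP : P.PosSemidef) :
    ∃ B : Matrix ι ι ℂ, P = Bᴴ * B := by
  classical
  open scoped MatrixOrder in
  exact CStarAlgebra.nonneg_iff_eq_star_mul_self.mp hP.nonneg

lemma PosSemidef.trace_mul_nonneg {P Q : Matrix ι ι ℂ} (hP : P.PosSemidef) (hQ : Q.PosSemidef) :
    0 ≤ (P * Q).trace := by
  obtain ⟨B, rfl⟩ := hP.exists_eq_conjTranspose_mul_self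
  rw [Matrix.mul_assoc, trace_mul_comm]
  exact (hQ.mul_mul_conjTranspose_same B).trace_nonneg

end PosSemidef

section piKron

variable {N ι R : Type*} [Fintype N]

def piKron [CommMonoid R] (A : N → Matrix ι ι R) : Matrix (N → ι) (N → ι) R :=
  of fun f g => ∏ m, A m (f m) (g m)

@[simp]
lemma piKron_apply [CommMonoid R] (A : N → Matrix ι ι R) (f g : N → ι) :
    piKron A f g = ∏ m, A m (f m) (g m) := rfl

lemma conjTranspose_piKron [CommMonoid R] [StarMul R] (A : N → Matrix ι ι R) :
    (piKron A)ᴴ = piKron fun m => (A m)ᴴ := by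
  ext f g
  simp [conjTranspose_apply, star_prod]

variable [CommSemiring R]

lemma piKron_mul_piKron [DecidableEq N] [Fintype ι] (A B : N → Matrix ι ι R) :
    piKron A * piKron B = piKron fun m => A m * B m := by
  ext f g
  simp only [mul_apply, piKron_apply, prod_univ_sum, Fintype.piFinset_univ]
  simp [Finset.prod_mul_distrib]

lemma trace_piKron [DecidableEq N] [Fintype ι] (A : N → Matrix ι ι R) :
    (piKron A).trace = ∏ m, (A m).trace := by
  simp only [trace, diag_apply, piKron_apply, prod_univ_sum, Fintype.piFinset_univ]

lemma piKron_one [DecidableEq ι] : piKron (fun _ : N => (1 : Matrix ι ι R)) = 1 := by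
  ext f g
  simp only [piKron_apply, one_apply, prod_boole, funext_iff]
  simp

lemma piKron_smul (c : N → R) (A : N → Matrix ι ι R) :
    piKron (fun m => c m • A m) = (∏ m, c m) • piKron A := by
  ext f g
  simp [Finset.prod_mul_distrib]

lemma piKron_const_add_smul [DecidableEq N] (A B : Matrix ι ι R) (x : R) :
    piKron (fun _ : N => B + x • A) =
      ∑ S ∈ univ.powerset, x ^ #S • piKron fun m => if m ∈ S then A else B := by
  ext f g
  simp only [piKron_apply, add_apply, smul_apply, smul_eq_mul, sum_apply, add_comm (B _ _),
    prod_add]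
  refine sum_congr rfl fun S _ => ?_
  rw [← prod_mul_prod_compl S, prod_mul_distrib, prod_const, compl_eq_univ_sdiff, mul_assoc]
  congr 2
  · exact prod_congr rfl fun m hm => by simp [hm]
  · exact prod_congr rfl fun m hm => by simp [(mem_sdiff.mp hm).2]

lemma piKron_update_sub {R : Type*} [CommRing R] [DecidableEq N] (A : N → Matrix ι ι R) (i : N)
    (B C : Matrix ι ι R) :
    piKron (Function.update A i (B - C)) =
      piKron (Function.update A i B) - piKron (Function.update A i C) := by
  ext f g
  simp only [piKron_apply, sub_apply, Fintype.prod_eq_mul_prod_compl i, Function.update_self]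
  rw [sub_mul]
  congr 2 <;> refine prod_congr rfl fun m hm => ?_ <;>
    simp [Function.update_of_ne (mem_compl.mp hm ∘ mem_singleton.mpr)]

variable [Fintype ι]

lemma PosSemidef.piKron {A : N → Matrix ι ι ℂ} (h : ∀ m, (A m).PosSemidef) :
    (piKron A).PosSemidef := by
  classical
  choose B hB using fun m => (h m).exists_eq_conjTranspose_mul_self
  rw [funext hB, ← piKron_mul_piKron, ← conjTranspose_piKron]
  exact posSemidef_conjTranspose_mul_self _

lemma posSemidef_one_sub_piKron [DecidableEq ι] {A : N → Matrix ι ι ℂ}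
    (h0 : ∀ m, (A m).PosSemidef) (h1 : ∀ m, (1 - A m).PosSemidef) :
    (1 - piKron A).PosSemidef := by
  classical
  let restrict (S : Finset N) (m : N) : Matrix ι ι ℂ := if m ∈ S then A m else 1
  suffices ∀ S, (1 - piKron (restrict S)).PosSemidef by simpa [restrict] using this univ
  intro S
  -- Turning the factor at `a` from `1` into `A a` subtracts a product with factor `1 - A a` there.
  induction S using Finset.induction_on with
  | empty => simpa [restrict, piKron_one] using PosSemidef.zero
  | insert a S ha ih =>
    have hstep : piKron (restrict S) - piKron (restrict (insert a S)) =
        piKron (Function.update (restrict S) a (1 - A a)) := by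
      rw [piKron_update_sub]
      congr 2 <;> funext m <;> rcases eq_or_ne m a with rfl | hm <;>
        simp [restrict, Function.update_of_ne, *]
    rw [show 1 - piKron (restrict (insert a S)) = (1 - piKron (restrict S)) +
        (piKron (restrict S) - piKron (restrict (insert a S))) by abel, hstep]
    refine ih.add (PosSemidef.piKron fun m => ?_)
    rcases eq_or_ne m a with rfl | hm
    · simpa using h1 m
    · simp only [Function.update_of_ne hm, restrict]
      split_ifs
      exacts [h0 m, PosSemidef.one]

lemma posSemidef_piKron_add_smul_sub_piKron_add_smul {P Q : Matrix ι ι ℂ}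
    (hP : P.PosSemidef) (hQ : Q.PosSemidef) {a b : ℝ} (hab : |b| ≤ a) :
    (piKron (fun _ : N => Q + (a : ℂ) • P) - piKron fun _ : N => Q + (b : ℂ) • P).PosSemidef := by
  classical
  rw [piKron_const_add_smul, piKron_const_add_smul, ← sum_sub_distrib]
  refine posSemidef_sum _ fun S _ => ?_
  rw [← sub_smul, ← Complex.ofReal_pow, ← Complex.ofReal_pow, ← Complex.ofReal_sub]
  refine (PosSemidef.piKron fun m => ?_).smul (Complex.zero_le_real.mpr ?_)
  · split_ifs
    exacts [hP, hQ]
  · rw [sub_nonneg]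
    calc b ^ #S ≤ |b| ^ #S := (le_abs_self _).trans (abs_pow b _).le
      _ ≤ a ^ #S := pow_le_pow_left₀ (abs_nonneg b) hab _

end piKron

end Matrix

section SingleCopy

variable {d : ℕ}

lemma conjTranspose_flip : (Flip d)ᴴ = Flip d := by
  ext p q
  simp only [Flip, conjTranspose_apply, of_apply]
  split_ifs <;> simp_all

lemma flip_mul_flip : Flip d * Flip d = 1 := by
  ext p r
  simp only [Flip, mul_apply, of_apply, one_apply, mul_ite, mul_one, mul_zero]
  rw [Finset.sum_eq_single (p.2, p.1)] <;> aesop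

lemma trace_flip : (Flip d).trace = d := by
  simp only [trace, diag_apply, Flip, of_apply, Fintype.sum_prod_type]
  simp [eq_comm]

lemma isStarProjection_phi (hd : d ≠ 0) : IsStarProjection (Phi d) where
  isIdempotentElem := by
    ext p q
    simp only [Phi, mul_apply, of_apply]
    by_cases h1 : p.1 = p.2 <;> by_cases h2 : q.1 = q.2 <;>
      simp [h1, h2, Fintype.sum_prod_type, hd]
  isSelfAdjoint := by
    ext p q
    simp only [Phi, star_apply, of_apply]
    split_ifs <;> simp_all

lemma pt_add (X Y : Matrix (Fin d × Fin d) (Fin d × Fin d) ℂ) : pt (X + Y) = pt X + pt Y := rfl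

lemma pt_sub (X Y : Matrix (Fin d × Fin d) (Fin d × Fin d) ℂ) : pt (X - Y) = pt X - pt Y := rfl

lemma pt_smul (c : ℂ) (X : Matrix (Fin d × Fin d) (Fin d × Fin d) ℂ) : pt (c • X) = c • pt X :=
  rfl

lemma pt_one : pt (1 : Matrix (Fin d × Fin d) (Fin d × Fin d) ℂ) = 1 := by
  ext p q
  simp only [pt, of_apply, one_apply, Prod.ext_iff]
  split_ifs <;> simp_all [eq_comm]

lemma pt_flip (hd : d ≠ 0) : pt (Flip d) = (d : ℂ) • Phi d := by
  ext p q
  simp only [pt, Flip, Phi, of_apply, Matrix.smul_apply, smul_eq_mul]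
  split_ifs <;> simp_all [eq_comm]

lemma isStarProjection_projSym : IsStarProjection (projSym d) :=
  isStarProjection_inv_two_smul_one_add conjTranspose_flip flip_mul_flip

lemma projAsym_eq_one_sub_projSym : projAsym d = 1 - projSym d := by
  simp only [projAsym, projSym]
  module

lemma isStarProjection_projAsym : IsStarProjection (projAsym d) := by
  rw [projAsym_eq_one_sub_projSym]
  exact isStarProjection_projSym.one_sub

lemma trace_projSym : (projSym d).trace = d * (d + 1) / 2 := by
  simp [projSym, trace_add, trace_flip, Fintype.card_prod]
  ring

lemma trace_projAsym : (projAsym d).trace = d * (d - 1) / 2 := by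
  simp [projAsym, trace_sub, trace_flip, Fintype.card_prod]
  ring

lemma ofReal_natCast_sub_one_div_add_one :
    ((((d : ℝ) - 1) / (d + 1) : ℝ) : ℂ) = ((d : ℂ) - 1) / (d + 1) := by
  push_cast
  rfl

lemma wernerSym_eq_smul_one_add_flip : wernerSym d = ((d : ℂ) * (d + 1))⁻¹ • (1 + Flip d) := by
  rw [wernerSym, projSym, smul_smul]
  congr 1
  ring

lemma smul_wernerAsym_eq_smul_one_sub_flip (hd : d ≠ 1) :
    (((d : ℂ) - 1) / (d + 1)) • wernerAsym d = ((d : ℂ) * (d + 1))⁻¹ • (1 - Flip d) := by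
  have : (d : ℂ) - 1 ≠ 0 := sub_ne_zero.mpr (mod_cast hd)
  rw [wernerAsym, projAsym, smul_smul, smul_smul]
  congr 1
  field_simp

lemma trace_wernerSym (hd : d ≠ 0) : (wernerSym d).trace = 1 := by
  have : (d : ℂ) ≠ 0 := mod_cast hd
  have : (d : ℂ) + 1 ≠ 0 := Nat.cast_add_one_ne_zero d
  rw [wernerSym, trace_smul, trace_projSym, smul_eq_mul]
  field_simp

lemma trace_wernerAsym (hd : 2 ≤ d) : (wernerAsym d).trace = 1 := by
  have : (d : ℂ) - 1 ≠ 0 := sub_ne_zero.mpr (mod_cast (by omega : d ≠ 1))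
  have : (d : ℂ) ≠ 0 := mod_cast (by omega : d ≠ 0)
  rw [wernerAsym, trace_smul, trace_projAsym, smul_eq_mul]
  field_simp

lemma posSemidef_wernerAsym (hd : 1 ≤ d) : (wernerAsym d).PosSemidef := by
  have hc : 2 / ((d : ℂ) * (d - 1)) = ((2 / (d * (d - 1)) : ℝ) : ℂ) := by push_cast; rfl
  have hd' : (1 : ℝ) ≤ d := mod_cast hd
  rw [wernerAsym, hc]
  exact isStarProjection_projAsym.posSemidef.smul
    (Complex.zero_le_real.mpr (div_nonneg zero_le_two (by nlinarith)))

lemma mdMat_mul_wernerSym :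
    MdMat d * wernerSym d = (((d : ℂ) - 1) / (d + 1)) • wernerSym d := by
  have h := isStarProjection_projSym (d := d)
  simp only [MdMat, wernerSym, add_mul, mul_smul_comm, smul_mul_assoc,
    projAsym_eq_one_sub_projSym, h.one_sub_mul_self, h.isIdempotentElem.eq, add_zero]
  exact smul_comm _ _ _

lemma mdMat_mul_wernerAsym : MdMat d * wernerAsym d = wernerAsym d := by
  have h := isStarProjection_projSym (d := d)
  simp only [MdMat, wernerAsym, add_mul, mul_smul_comm, smul_mul_assoc,
    projAsym_eq_one_sub_projSym, h.mul_one_sub_self, h.one_sub.isIdempotentElem.eq,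
    smul_zero, zero_add]

lemma posSemidef_mdMat (hd : 1 ≤ d) : (MdMat d).PosSemidef := by
  have hd' : (1 : ℝ) ≤ d := mod_cast hd
  rw [MdMat, ← ofReal_natCast_sub_one_div_add_one]
  exact (isStarProjection_projSym.posSemidef.smul
    (Complex.zero_le_real.mpr (div_nonneg (by linarith) (by positivity)))).add
    isStarProjection_projAsym.posSemidef

lemma one_sub_mdMat : 1 - MdMat d = (((2 / (d + 1) : ℝ)) : ℂ) • projSym d := by
  have : (d : ℂ) + 1 ≠ 0 := Nat.cast_add_one_ne_zero d
  rw [MdMat, projAsym_eq_one_sub_projSym]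
  push_cast
  match_scalars <;> field_simp <;> ring

lemma pt_mdMat (hd : d ≠ 0) :
    pt (MdMat d) = (((d / (d + 1) : ℝ)) : ℂ) • (1 - Phi d) := by
  have : (d : ℂ) + 1 ≠ 0 := Nat.cast_add_one_ne_zero d
  rw [MdMat, projSym, projAsym]
  simp only [pt_add, pt_sub, pt_smul, pt_one, pt_flip hd]
  push_cast
  match_scalars <;> field_simp <;> ring

lemma one_sub_pt_mdMat (hd : d ≠ 0) :
    1 - pt (MdMat d) = (((1 / (d + 1) : ℝ)) : ℂ) • (1 - Phi d) + Phi d := by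
  have : (d : ℂ) + 1 ≠ 0 := Nat.cast_add_one_ne_zero d
  rw [pt_mdMat hd]
  push_cast
  match_scalars <;> field_simp <;> ring

end SingleCopy

section TensorPower

variable {d n : ℕ}

lemma tpow_eq_piKron (X : Matrix (Fin d × Fin d) (Fin d × Fin d) ℂ) :
    tpow n X = piKron fun _ => X := rfl

lemma tpow_smul (c : ℂ) (X : Matrix (Fin d × Fin d) (Fin d × Fin d) ℂ) :
    tpow n (c • X) = c ^ n • tpow n X := by
  simp [tpow_eq_piKron, piKron_smul]

lemma tpow_mul_tpow (X Y : Matrix (Fin d × Fin d) (Fin d × Fin d) ℂ) :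
    tpow n X * tpow n Y = tpow n (X * Y) :=
  piKron_mul_piKron _ _

lemma trace_tpow (X : Matrix (Fin d × Fin d) (Fin d × Fin d) ℂ) :
    (tpow n X).trace = X.trace ^ n := by
  simp [tpow_eq_piKron, trace_piKron]

lemma ptN_sub (X Y : Matrix (Fin n → Fin d × Fin d) (Fin n → Fin d × Fin d) ℂ) :
    ptN (X - Y) = ptN X - ptN Y := rfl

lemma ptN_smul (c : ℂ) (X : Matrix (Fin n → Fin d × Fin d) (Fin n → Fin d × Fin d) ℂ) :
    ptN (c • X) = c • ptN X := rfl

lemma ptN_tpow (X : Matrix (Fin d × Fin d) (Fin d × Fin d) ℂ) :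
    ptN (tpow n X) = tpow n (pt X) := rfl

lemma ptN_one : ptN (1 : Matrix (Fin n → Fin d × Fin d) (Fin n → Fin d × Fin d) ℂ) = 1 := by
  calc ptN 1 = ptN (tpow n (1 : Matrix (Fin d × Fin d) (Fin d × Fin d) ℂ)) := by
        rw [tpow_eq_piKron, piKron_one]
    _ = 1 := by rw [ptN_tpow, pt_one, tpow_eq_piKron, piKron_one]

lemma trace_ptN_mul_ptN (X Y : Matrix (Fin n → Fin d × Fin d) (Fin n → Fin d × Fin d) ℂ) :
    (ptN X * ptN Y).trace = (X * Y).trace := by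
  let swap (fg : (Fin n → Fin d × Fin d) × (Fin n → Fin d × Fin d)) :
      (Fin n → Fin d × Fin d) × (Fin n → Fin d × Fin d) :=
    (fun m => ((fg.1 m).1, (fg.2 m).2), fun m => ((fg.2 m).1, (fg.1 m).2))
  have hswap : Function.Involutive swap := fun _ => rfl
  simp only [trace, diag_apply, mul_apply, ← Fintype.sum_prod_type']
  exact Fintype.sum_equiv hswap.toPerm _ _ fun _ => rfl

lemma isPPTPovmElem_tpow {M : Matrix (Fin d × Fin d) (Fin d × Fin d) ℂ}
    (h₀ : M.PosSemidef) (h₁ : (1 - M).PosSemidef) (hΓ₀ : (pt M).PosSemidef)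
    (hΓ₁ : (1 - pt M).PosSemidef) : IsPPTPovmElem (tpow n M) := by
  refine ⟨.piKron fun _ => h₀, posSemidef_one_sub_piKron (fun _ => h₀) fun _ => h₁,
    .piKron fun _ => hΓ₀, ?_⟩
  rw [ptN_sub, ptN_one, ptN_tpow]
  exact posSemidef_one_sub_piKron (fun _ => hΓ₀) fun _ => hΓ₁

lemma posSemidef_ptN_tpow_one_add_flip_sub_tpow_one_sub_flip (hd : d ≠ 0) :
    (ptN (tpow n (1 + Flip d) - tpow n (1 - Flip d))).PosSemidef := by
  have hΦ := isStarProjection_phi hd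
  have hplus : pt (1 + Flip d) = (1 - Phi d) + ((1 + d : ℝ) : ℂ) • Phi d := by
    rw [pt_add, pt_one, pt_flip hd]
    push_cast
    module
  have hminus : pt (1 - Flip d) = (1 - Phi d) + ((1 - d : ℝ) : ℂ) • Phi d := by
    rw [pt_sub, pt_one, pt_flip hd]
    push_cast
    module
  rw [ptN_sub, ptN_tpow, ptN_tpow, hplus, hminus]
  refine posSemidef_piKron_add_smul_sub_piKron_add_smul hΦ.posSemidef hΦ.one_sub.posSemidef ?_
  have : (0 : ℝ) ≤ d := d.cast_nonneg
  exact abs_le.mpr ⟨by linarith, by linarith⟩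

end TensorPower

section Discrimination

variable {d n : ℕ}

lemma isPPTPovmElem_tpow_mdMat (hd : 1 ≤ d) : IsPPTPovmElem (tpow n (MdMat d)) := by
  have hΦ := isStarProjection_phi (by omega : d ≠ 0)
  refine isPPTPovmElem_tpow (posSemidef_mdMat hd) ?_ ?_ ?_
  · rw [one_sub_mdMat]
    exact isStarProjection_projSym.posSemidef.smul (Complex.zero_le_real.mpr (by positivity))
  · rw [pt_mdMat (by omega)]
    exact hΦ.one_sub.posSemidef.smul (Complex.zero_le_real.mpr (by positivity))
  · rw [one_sub_pt_mdMat (by omega)]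
    exact (hΦ.one_sub.posSemidef.smul (Complex.zero_le_real.mpr (by positivity))).add
      hΦ.posSemidef

lemma pow_mul_re_trace_mul_tpow_wernerAsym_le (hd : 2 ≤ d)
    {E : Matrix (Fin n → Fin d × Fin d) (Fin n → Fin d × Fin d) ℂ} (hE : (ptN E).PosSemidef) :
    (((d : ℝ) - 1) / (d + 1)) ^ n * (E * tpow n (wernerAsym d)).trace.re ≤
      (E * tpow n (wernerSym d)).trace.re := by
  set c : ℂ := ((d : ℂ) * (d + 1))⁻¹
  have hc : 0 ≤ c ^ n := by
    have : c = (((d * (d + 1))⁻¹ : ℝ) : ℂ) := by push_cast; rfl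
    rw [this, ← Complex.ofReal_pow]
    exact Complex.zero_le_real.mpr (by positivity)
  have hdiff : tpow n (wernerSym d) - (((d : ℂ) - 1) / (d + 1)) ^ n • tpow n (wernerAsym d) =
      c ^ n • (tpow n (1 + Flip d) - tpow n (1 - Flip d)) := by
    rw [← tpow_smul, smul_wernerAsym_eq_smul_one_sub_flip (by omega),
      wernerSym_eq_smul_one_add_flip, tpow_smul, tpow_smul, smul_sub]
  have hpos : 0 ≤ (E * (c ^ n • (tpow n (1 + Flip d) - tpow n (1 - Flip d)))).trace := by
    rw [← trace_ptN_mul_ptN, ptN_smul]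
    exact hE.trace_mul_nonneg
      ((posSemidef_ptN_tpow_one_add_flip_sub_tpow_one_sub_flip (by omega)).smul hc)
  rw [← hdiff, mul_sub, trace_sub, mul_smul_comm, trace_smul,
    ← ofReal_natCast_sub_one_div_add_one, ← Complex.ofReal_pow, smul_eq_mul, Complex.nonneg_iff,
    Complex.sub_re, Complex.re_ofReal_mul] at hpos
  exact sub_nonneg.mp hpos.1

lemma errProb_eq (hd : 2 ≤ d) (p : ℝ)
    (E : Matrix (Fin n → Fin d × Fin d) (Fin n → Fin d × Fin d) ℂ) :
    errProb d n p E = p * (E * tpow n (wernerSym d)).trace.re +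
      (1 - p) * (1 - (E * tpow n (wernerAsym d)).trace.re) := by
  rw [errProb, Matrix.sub_mul, Matrix.one_mul, trace_sub, trace_tpow, trace_wernerAsym hd,
    one_pow, ← Complex.ofReal_one, ← Complex.ofReal_sub, Complex.add_re, Complex.re_ofReal_mul,
    Complex.re_ofReal_mul, Complex.sub_re, Complex.ofReal_re]

lemma errProb_tpow_mdMat (hd : 2 ≤ d) (p : ℝ) :
    errProb d n p (tpow n (MdMat d)) = p * (((d : ℝ) - 1) / (d + 1)) ^ n := by
  rw [errProb_eq hd, tpow_mul_tpow, tpow_mul_tpow, trace_tpow, trace_tpow, mdMat_mul_wernerSym,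
    mdMat_mul_wernerAsym, trace_smul, trace_wernerSym (by omega), trace_wernerAsym hd,
    ← ofReal_natCast_sub_one_div_add_one]
  simp only [smul_eq_mul, mul_one, one_pow, Complex.one_re, sub_self, mul_zero, add_zero,
    ← Complex.ofReal_pow, Complex.ofReal_re]

lemma le_errProb_of_isPPTPovmElem (hd : 2 ≤ d) {p : ℝ} (hp : 0 ≤ p)
    (hpn : p * (((d : ℝ) - 1) / (d + 1)) ^ n ≤ 1 - p)
    {E : Matrix (Fin n → Fin d × Fin d) (Fin n → Fin d × Fin d) ℂ} (hE : IsPPTPovmElem E) :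
    p * (((d : ℝ) - 1) / (d + 1)) ^ n ≤ errProb d n p E := by
  obtain ⟨-, hE₁, hEΓ, -⟩ := hE
  have hα : (E * tpow n (wernerAsym d)).trace.re ≤ 1 := by
    have := hE₁.trace_mul_nonneg (PosSemidef.piKron fun _ => posSemidef_wernerAsym (by omega))
    rw [← tpow_eq_piKron, sub_mul, one_mul, trace_sub, trace_tpow, trace_wernerAsym hd, one_pow,
      Complex.nonneg_iff, Complex.sub_re, Complex.one_re] at this
    linarith [this.1]
  rw [errProb_eq hd]
  nlinarith [pow_mul_re_trace_mul_tpow_wernerAsym_le hd hEΓ]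

lemma sInf_errProb_eq (hd : 2 ≤ d) {p : ℝ} (hp : 0 ≤ p)
    (hpn : p * (((d : ℝ) - 1) / (d + 1)) ^ n ≤ 1 - p) :
    sInf {x : ℝ | ∃ E : Matrix (Fin n → Fin d × Fin d) (Fin n → Fin d × Fin d) ℂ,
      IsPPTPovmElem E ∧ x = errProb d n p E} = p * (((d : ℝ) - 1) / (d + 1)) ^ n :=
  IsLeast.csInf_eq ⟨⟨_, isPPTPovmElem_tpow_mdMat (by omega), (errProb_tpow_mdMat hd p).symm⟩,
    by rintro _ ⟨E, hE, rfl⟩; exact le_errProb_of_isPPTPovmElem hd hp hpn hE⟩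

end Discrimination

/-- the PPT (hence LOCC) Chernoff distance between `σ_d` and `α_d`
is `log((d+1)/(d−1))`. -/
theorem ppt_chernoff_distance (d : ℕ) (hd : 2 ≤ d) (p : ℝ) (hp0 : 0 < p) (hp1 : p < 1) :
    Filter.Tendsto
      (fun n : ℕ =>
        -(1 / (n : ℝ)) * Real.log (sInf { x : ℝ |
          ∃ E : Matrix (Fin n → Fin d × Fin d) (Fin n → Fin d × Fin d) ℂ,
            IsPPTPovmElem E ∧ x = errProb d n p E }))
      Filter.atTop (nhds (Real.log (((d : ℝ) + 1) / ((d : ℝ) - 1)))) := by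
  set r : ℝ := ((d : ℝ) - 1) / (d + 1) with hr
  have hd' : (2 : ℝ) ≤ d := mod_cast hd
  have hr0 : 0 < r := div_pos (by linarith) (by linarith)
  have hr1 : r < 1 := (div_lt_one (by linarith)).mpr (by linarith)
  have hsmall : ∀ᶠ n : ℕ in Filter.atTop, p * r ^ n ≤ 1 - p := by
    have : Filter.Tendsto (fun n : ℕ => p * r ^ n) Filter.atTop (nhds (p * 0)) :=
      (tendsto_pow_atTop_nhds_zero_of_lt_one hr0.le hr1).const_mul p
    rw [mul_zero] at this
    exact (this.eventually_lt_const (by linarith)).mono fun _ => le_of_lt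
  have hlim : Filter.Tendsto (fun n : ℕ => -Real.log p / n - Real.log r) Filter.atTop
      (nhds (Real.log (((d : ℝ) + 1) / ((d : ℝ) - 1)))) := by
    rw [show Real.log (((d : ℝ) + 1) / ((d : ℝ) - 1)) = 0 - Real.log r by
      rw [hr, ← inv_div, Real.log_inv, zero_sub]]
    exact (tendsto_const_div_atTop_nhds_zero_nat _).sub_const _
  refine hlim.congr' ?_
  filter_upwards [hsmall, Filter.eventually_ne_atTop 0] with n hn hn0
  rw [sInf_errProb_eq hd hp0.le hn, Real.log_mul hp0.ne' (pow_ne_zero _ hr0.ne'), Real.log_pow]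
  field_simp
  ring

end
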